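/- arXiv:1103.1704 — 5 statements merged into one kernel-verified Lean document; each statement's English description precedes it below -/
import Mathlib

section
/- Let q ≥ 1, e ≥ 2, and a be integers, and for i = 1, …, e+1 let V_i be nonzero finite-dimensional complex vector spaces. If there exists an exact complex of sheaves on P^{q-1} of the form 0 → V_{e+1} ⊗ O(-a) → V_e ⊗ O(-a+1) → ⋯ → V_1 ⊗ O(-a+e) → 0 (where each map twists by one), then q ≤ e. -/
/-!
The category `C` stands in for coherent sheaves on `P^{q-1}`, with `O x = O(x)`; `hO` records
`Extⁱ(O(x), O(y)) = Hⁱ(P^{q-1}, O(y-x))`.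

Put `X = O(-a+e)` and let `Zⁱ` be the cycles of the complex. Exactness cuts it into short exact
sequences `0 → Zⁱ → Kⁱ → Zⁱ⁺¹ → 0`, so `Extⁿ(X, Zⁱ⁺¹)` sits between `Extⁿ(X, Kⁱ)` and
`Extⁿ⁺¹(X, Zⁱ)`. If `q > e`, the groups `Extⁿ(X, O(-a+i))` with `i + n + 1 = e` all vanish, and
`Z⁰ = 0`, so by dimension shifting `Hom(X, Zᵉ) = 0`. But `Zᵉ = Kᵉ` is a nonzero sum of copies
of `X`, which contradicts `Hom(X, X) ≠ 0`.
-/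

open CategoryTheory CategoryTheory.Limits CategoryTheory.Abelian
attribute [local instance] CategoryTheory.Abelian.hasFiniteBiproducts

universe w v u

namespace CategoryTheory.Abelian.Ext

variable {C : Type u} [Category.{v} C] [Abelian C] [HasExt.{w} C]

lemma subsingleton_of_isZero {Y : C} (hY : IsZero Y) (X : C) (n : ℕ) :
    Subsingleton (Ext X Y n) :=
  AddCommGrpCat.isZero_iff_subsingleton.mp ((extFunctorObj X n).map_isZero hY)

lemma nontrivial_of_iso {Y Y' : C} (e : Y ≅ Y') (X : C) (n : ℕ) [Nontrivial (Ext X Y n)] :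
    Nontrivial (Ext X Y' n) :=
  @Equiv.nontrivial _ (Ext X Y n)
    ((extFunctorObj X n).mapIso e).addCommGroupIsoToAddEquiv.symm.toEquiv _

lemma subsingleton_biproduct {J : Type*} [Fintype J] (Y : J → C) [HasBiproduct Y] (X : C)
    (n : ℕ) [∀ j, Subsingleton (Ext X (Y j) n)] : Subsingleton (Ext X (⨁ Y) n) :=
  (addEquivBiproduct X (biproduct.isBilimit Y) n).toEquiv.subsingleton

lemma nontrivial_biproduct {J : Type*} [Fintype J] (Y : J → C) [HasBiproduct Y] (X : C)
    (n : ℕ) (j : J) [Nontrivial (Ext X (Y j) n)] : Nontrivial (Ext X (⨁ Y) n) :=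
  have := Pi.nontrivial_at (f := fun j => Ext X (Y j) n) j
  (addEquivBiproduct X (biproduct.isBilimit Y) n).toEquiv.nontrivial

lemma subsingleton_of_shortExact {S : ShortComplex C} (hS : S.ShortExact) (X : C) {n₀ n₁ : ℕ}
    (h : n₀ + 1 = n₁) (h₂ : Subsingleton (Ext X S.X₂ n₀)) (h₁ : Subsingleton (Ext X S.X₁ n₁)) :
    Subsingleton (Ext X S.X₃ n₀) :=
  subsingleton_of_forall_eq 0 fun x₃ => by
    obtain ⟨x₂, rfl⟩ := covariant_sequence_exact₃ X hS x₃ h (Subsingleton.elim _ _)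
    rw [Subsingleton.elim x₂ 0, zero_comp]

end CategoryTheory.Abelian.Ext

namespace HomologicalComplex

variable {C : Type u} [Category.{v} C] [Abelian C] {ι : Type*} {c : ComplexShape ι}

noncomputable def cyclesShortComplex (K : HomologicalComplex C c) (i j : ι) : ShortComplex C :=
  ShortComplex.mk (K.iCycles i) (K.toCycles i j) (by simp [← cancel_mono (K.iCycles j)])

lemma shortExact_cyclesShortComplex (K : HomologicalComplex C c) {i j : ι} (hij : c.Rel i j)
    (hj : K.ExactAt j) : (K.cyclesShortComplex i j).ShortExact := by
  have hepi : Epi (K.toCycles i j) := by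
    obtain rfl := c.prev_eq' hij
    exact hj.epi_toCycles
  let φ : K.cyclesShortComplex i j ⟶ ShortComplex.mk (K.iCycles i) (K.d i j) (K.iCycles_d i j) :=
    { τ₁ := 𝟙 (K.cycles i), τ₂ := 𝟙 (K.X i), τ₃ := K.iCycles j
      comm₁₂ := (Category.id_comp _).trans (Category.comp_id _).symm
      comm₂₃ := (Category.id_comp _).trans (K.toCycles_i i j).symm }
  have : Epi φ.τ₁ := inferInstanceAs (Epi (𝟙 _))
  have : IsIso φ.τ₂ := inferInstanceAs (IsIso (𝟙 _))
  have : Mono φ.τ₃ := inferInstanceAs (Mono (K.iCycles j))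
  have hexact := (ShortComplex.exact_iff_of_epi_of_isIso_of_mono φ).mpr
    (ShortComplex.exact_of_f_is_kernel _ (K.cyclesIsKernel i j (c.next_eq' hij)))
  exact .mk' hexact (inferInstanceAs (Mono (K.iCycles i))) hepi

end HomologicalComplex

namespace CochainComplex

variable {C : Type u} [Category.{v} C] [Abelian C]

lemma isZero_cycles_zero {K : CochainComplex C ℕ} (hK : K.ExactAt 0) : IsZero (K.cycles 0) :=
  ((K.exactAt_iff_isZero_homology 0).mp hK).of_iso K.isoHomologyπ₀

lemma subsingleton_ext_cycles [HasExt.{w} C] {K : CochainComplex C ℕ} (hK : K.Acyclic) (X : C)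
    {N : ℕ} (hX : ∀ i n, i + n + 1 = N → Subsingleton (Ext X (K.X i) n)) :
    ∀ i n, i + n = N → Subsingleton (Ext X (K.cycles i) n) := by
  intro i
  induction i with
  | zero => exact fun n _ => Ext.subsingleton_of_isZero (isZero_cycles_zero (hK 0)) X n
  | succ i ih =>
    intro n hin
    exact Ext.subsingleton_of_shortExact
      (K.shortExact_cyclesShortComplex (i := i) (by simp) (hK (i + 1))) X rfl
      (hX i n (by omega)) (ih (n + 1) (by omega))

end CochainComplex

theorem stmt0_general {C : Type u} [Category.{v} C] [Abelian C] [HasExt.{w} C]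
    (q e : ℕ) (a : ℤ)
    (O : ℤ → C)
    (hO : ∀ (x y : ℤ) (i : ℕ),
      Nontrivial (Ext (O x) (O y) i) ↔ (i = 0 ∧ x ≤ y) ∨ (i = q - 1 ∧ y + (q : ℤ) ≤ x))
    (m : ℕ → ℕ) (hm : ∀ i, i ≤ e → 0 < m i)
    (K : CochainComplex C ℕ)
    (hK : ∀ i, i ≤ e → K.X i = ⨁ (fun _ : Fin (m i) => O (-a + (i : ℤ))))
    (hK0 : ∀ i, e < i → IsZero (K.X i))
    (hex : ∀ i, K.ExactAt i) :
    q ≤ e := by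
  by_contra! hqe
  have hvanish : ∀ i n, i + n + 1 = e → Subsingleton (Ext (O (-a + e)) (K.X i) n) := by
    intro i n hin
    rw [hK i (by omega)]
    have : Subsingleton (Ext (O (-a + e)) (O (-a + i)) n) :=
      not_nontrivial_iff_subsingleton.mp fun h => by have := (hO _ _ n).mp h; omega
    exact Ext.subsingleton_biproduct _ _ n
  have hcycles := K.subsingleton_ext_cycles hex (O (-a + e)) hvanish e 0 rfl
  have : Nontrivial (Ext (O (-a + e)) (K.X e) 0) := by
    rw [hK e le_rfl]
    have := (hO (-a + e) (-a + e) 0).mpr (Or.inl ⟨rfl, le_rfl⟩)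
    exact Ext.nontrivial_biproduct _ _ 0 ⟨0, hm e le_rfl⟩
  have hde : K.d e (e + 1) = 0 := (hK0 (e + 1) (by omega)).eq_of_tgt _ _
  have := Ext.nontrivial_of_iso (K.iCyclesIso e (e + 1) (by simp) hde).symm (O (-a + e)) 0
  exact not_nontrivial_iff_subsingleton.mpr hcycles this

theorem stmt0 {C : Type u} [Category.{v} C] [Abelian C] [HasExt.{w} C]
    (q e : ℕ) (a : ℤ) (hq : 1 ≤ q) (he : 2 ≤ e)
    (O : ℤ → C)
    (hO : ∀ (x y : ℤ) (i : ℕ),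
      Nontrivial (Ext (O x) (O y) i) ↔ (i = 0 ∧ x ≤ y) ∨ (i = q - 1 ∧ y + (q : ℤ) ≤ x))
    (m : ℕ → ℕ) (hm : ∀ i, i ≤ e → 0 < m i)
    (K : CochainComplex C ℕ)
    (hK : ∀ i, i ≤ e → K.X i = ⨁ (fun _ : Fin (m i) => O (-a + (i : ℤ))))
    (hK0 : ∀ i, e < i → IsZero (K.X i))
    (hex : ∀ i, K.ExactAt i) :
    q ≤ e :=
  stmt0_general q e a O hO m hm K hK hK0 hex
end

section
/- Let q ≥ 1, e ≥ 2, t ≥ 1, and a be integers, let V_1, …, V_{e+1} and Z_1, …, Z_t be nonzero finite-dimensional complex vector spaces, and let k_1, …, k_t be integers with k_s ≥ −a+e for all s. If there exists an exact complex of sheaves on P^{q-1} of the form 0 → V_{e+1} ⊗ O(-a) → V_e ⊗ O(-a+1) → ⋯ → V_1 ⊗ O(-a+e) → ⊕_{s=1}^t (Z_s ⊗ O(k_s)) → 0, then q ≤ e + 1. -/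
/-!
STATEMENT 1 (Lemma 2.2 (ii) of the paper).

As in Statement 0, the category of coherent sheaves on `P^{q-1}` is modeled by an
abelian category `C` with twisting objects `O : ℤ → C`, where the hypothesis `hO`
is the standard characterization of `Ext^i(O(x), O(y)) ≅ H^i(P^{q-1}, O(y-x))` on
projective `(q-1)`-space.

The exact complex
`0 → V_{e+1} ⊗ O(-a) → ⋯ → V_1 ⊗ O(-a+e) → ⊕_{s=1}^t (Z_s ⊗ O(k_s)) → 0`
is encoded as a `ℕ`-indexed cochain complex `K`: for `i ≤ e` the `i`-th term is a
biproduct of `m i = dim V_{e+1-i} ≥ 1` copies of `O(-a+i)`, the `(e+1)`-st term is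
`⊕_s (Z_s ⊗ O(k_s))` with `dim Z_s = z s ≥ 1` and `k_s ≥ -a+e`, the terms vanish
in degrees `> e+1`, and `K` is exact everywhere.  The conclusion is `q ≤ e + 1`.
-/

open CategoryTheory CategoryTheory.Limits CategoryTheory.Abelian
attribute [local instance] CategoryTheory.Abelian.hasFiniteBiproducts

universe w v u

section AuxStmt1

variable {C : Type u} [Category.{v} C] [Abelian C] [HasExt.{w} C]

lemma ext_comp_mk₀_comp_mk₀_stmt1 {T A B D : C} {n : ℕ} (x : Ext T A n) (f : A ⟶ B) (g : B ⟶ D) :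
    (x.comp (Ext.mk₀ f) (add_zero n)).comp (Ext.mk₀ g) (add_zero n)
      = x.comp (Ext.mk₀ (f ≫ g)) (add_zero n) := by
  rw [Ext.comp_assoc_of_third_deg_zero, Ext.mk₀_comp_mk₀]

lemma subsingleton_ext_retract_stmt1 {T A B : C} (u : A ⟶ B) (r : B ⟶ A) (hur : u ≫ r = 𝟙 A)
    (n : ℕ) (h : Subsingleton (Ext T B n)) : Subsingleton (Ext T A n) := by
  have hx : ∀ (x : Ext T A n),
      x = (x.comp (Ext.mk₀ u) (add_zero n)).comp (Ext.mk₀ r) (add_zero n) := by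
    intro x
    rw [ext_comp_mk₀_comp_mk₀_stmt1, hur, Ext.comp_mk₀_id]
  constructor
  intro x y
  rw [hx x, hx y, h.elim (x.comp (Ext.mk₀ u) (add_zero n)) (y.comp (Ext.mk₀ u) (add_zero n))]

lemma nontrivial_ext_retract_stmt1 {T A B : C} (u : A ⟶ B) (r : B ⟶ A) (hur : u ≫ r = 𝟙 A)
    (n : ℕ) (h : Nontrivial (Ext T A n)) : Nontrivial (Ext T B n) := by
  by_contra hc
  rw [not_nontrivial_iff_subsingleton] at hc
  exact (not_subsingleton_iff_nontrivial.mpr h) (subsingleton_ext_retract_stmt1 u r hur n hc)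

lemma mk₀_add_stmt1 {A B : C} (f g : A ⟶ B) :
    Ext.mk₀ (f + g) = Ext.mk₀ f + Ext.mk₀ g := by
  letI := HasDerivedCategory.standard C
  apply Ext.ext
  rw [Ext.add_hom, Ext.mk₀_hom, Ext.mk₀_hom, Ext.mk₀_hom, Functor.map_add]
  simp [ShiftedHom.mk₀, Preadditive.add_comp]

lemma mk₀_sum_stmt1 {A B : C} {ι : Type*} (s : Finset ι) (g : ι → (A ⟶ B)) :
    Ext.mk₀ (∑ i ∈ s, g i) = ∑ i ∈ s, Ext.mk₀ (g i) := by
  classical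
  induction s using Finset.cons_induction with
  | empty => simp [Ext.mk₀_zero]
  | cons i s hi ih => rw [Finset.sum_cons, Finset.sum_cons, mk₀_add_stmt1, ih]

lemma subsingleton_ext_biproduct_stmt1 {T : C} {ι : Type} [Fintype ι] (Xs : ι → C) (n : ℕ)
    (h : ∀ f, Subsingleton (Ext T (Xs f) n)) : Subsingleton (Ext T (⨁ Xs) n) := by
  suffices hz : ∀ (x : Ext T (⨁ Xs) n), x = 0 by
    exact ⟨fun x y => by rw [hz x, hz y]⟩
  intro x
  have h4 : ∀ j : ι, x.comp (Ext.mk₀ (biproduct.π Xs j ≫ biproduct.ι Xs j)) (add_zero n) = 0 := by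
    intro j
    rw [← ext_comp_mk₀_comp_mk₀_stmt1,
      (h j).elim (x.comp (Ext.mk₀ (biproduct.π Xs j)) (add_zero n)) 0, Ext.zero_comp]
  have h3 := map_sum ((Ext.bilinearComp T (⨁ Xs) (⨁ Xs) n 0 n (add_zero n)) x)
    (fun j => Ext.mk₀ (biproduct.π Xs j ≫ biproduct.ι Xs j)) Finset.univ
  simp only [Ext.bilinearComp_apply_apply] at h3
  calc x = x.comp (Ext.mk₀ (𝟙 (⨁ Xs))) (add_zero n) := (Ext.comp_mk₀_id x).symm
    _ = x.comp (∑ j : ι, Ext.mk₀ (biproduct.π Xs j ≫ biproduct.ι Xs j)) (add_zero n) := by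
        rw [← mk₀_sum_stmt1, biproduct.total]
    _ = ∑ j : ι, x.comp (Ext.mk₀ (biproduct.π Xs j ≫ biproduct.ι Xs j)) (add_zero n) := h3
    _ = 0 := Finset.sum_eq_zero (fun j _ => h4 j)

lemma nontrivial_ext_biproduct_stmt1 {T : C} {ι : Type} [Fintype ι] (Xs : ι → C) (n : ℕ)
    (j : ι) (h : Nontrivial (Ext T (Xs j) n)) : Nontrivial (Ext T (⨁ Xs) n) :=
  nontrivial_ext_retract_stmt1 (biproduct.ι Xs j) (biproduct.π Xs j)
    (biproduct.ι_π_self Xs j) n h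

end AuxStmt1

theorem stmt1 {C : Type u} [Category.{v} C] [Abelian C] [HasExt.{w} C]
    (q e t : ℕ) (a : ℤ) (hq : 1 ≤ q) (he : 2 ≤ e) (ht : 1 ≤ t)
    (O : ℤ → C)
    (hO : ∀ (x y : ℤ) (i : ℕ),
      Nontrivial (Ext (O x) (O y) i) ↔ (i = 0 ∧ x ≤ y) ∨ (i = q - 1 ∧ y + (q : ℤ) ≤ x))
    (m : ℕ → ℕ) (hm : ∀ i, i ≤ e → 0 < m i)
    (z : Fin t → ℕ) (hz : ∀ s, 0 < z s)
    (k : Fin t → ℤ) (hk : ∀ s, -a + (e : ℤ) ≤ k s)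
    (K : CochainComplex C ℕ)
    (hK : ∀ i, i ≤ e → K.X i = ⨁ (fun _ : Fin (m i) => O (-a + (i : ℤ))))
    (hKtop : K.X (e + 1) = ⨁ (fun s : Fin t => ⨁ (fun _ : Fin (z s) => O (k s))))
    (hK0 : ∀ i, e + 1 < i → IsZero (K.X i))
    (hex : ∀ i, K.ExactAt i) :
    q ≤ e + 1 := by
  by_contra hq'
  have hq2 : e + 2 ≤ q := by omega
  set T := O (-a + (q : ℤ)) with hT
  -- vanishing of Ext groups into the middle terms
  have hvX : ∀ i : ℕ, 1 ≤ i → i ≤ e → Subsingleton (Ext T (K.X i) (q - i)) := by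
    intro i h1 h2
    rw [hK i h2]
    apply subsingleton_ext_biproduct_stmt1
    intro f
    rw [← not_nontrivial_iff_subsingleton, hO]
    rintro (⟨h0, hle⟩ | ⟨h0, hle⟩) <;> omega
  have hvTop : Subsingleton (Ext T (K.X (e + 1)) (q - (e + 1))) := by
    rw [hKtop]
    apply subsingleton_ext_biproduct_stmt1
    intro s
    apply subsingleton_ext_biproduct_stmt1
    intro f
    rw [← not_nontrivial_iff_subsingleton, hO]
    rintro (⟨h0, hle⟩ | ⟨h0, hle⟩) <;> omega
  -- the maps `K.X i ⟶ K.cycles (i+1)` are epimorphisms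
  have hepi : ∀ i : ℕ, Epi (K.toCycles i (i + 1)) := by
    intro i
    have hz : IsZero (K.homology (i + 1)) :=
      (K.exactAt_iff_isZero_homology (i + 1)).mp (hex (i + 1))
    exact Preadditive.epi_of_isZero_cokernel' _
      (K.homologyIsCokernel i (i + 1) (by simp)) hz
  -- short exact sequences 0 → cycles i → X i → cycles (i+1) → 0
  have hw : ∀ i : ℕ, K.iCycles i ≫ K.toCycles i (i + 1) = 0 := by
    intro i
    rw [← cancel_mono (K.iCycles (i + 1)), Category.assoc, HomologicalComplex.toCycles_i,
      HomologicalComplex.iCycles_d, zero_comp]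
  have hses : ∀ i : ℕ, (ShortComplex.mk (K.iCycles i) (K.toCycles i (i + 1)) (hw i)).ShortExact := by
    intro i
    have hlim : IsLimit (KernelFork.ofι (K.iCycles i) (hw i)) := by
      refine KernelFork.IsLimit.ofι _ _
        (fun {W'} g' hg' => K.liftCycles g' (i + 1) (by simp) ?_) ?_ ?_
      · rw [← HomologicalComplex.toCycles_i, ← Category.assoc, hg', zero_comp]
      · intro W' g' hg'
        simp
      · intro W' g' hg' f hf
        rw [← cancel_mono (K.iCycles i), hf]
        simp
    exact ShortComplex.ShortExact.mk'
      (ShortComplex.exact_of_f_is_kernel _ hlim) inferInstance (hepi i)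
  -- the inductive nontriviality statement
  have main : ∀ i : ℕ, 1 ≤ i → i ≤ e + 1 → Nontrivial (Ext T (K.cycles i) (q - i)) := by
    intro i h1
    induction i, h1 using Nat.le_induction with
    | base =>
      intro _
      -- `K.toCycles 0 1` is an isomorphism
      have hmono : Mono (K.toCycles 0 1) := by
        have h0 : (K.sc' 0 0 1).Exact :=
          (K.exactAt_iff' 0 0 1 (by simp) (by simp)).mp (hex 0)
        have hf0 : (K.sc' 0 0 1).f = 0 := K.shape 0 0 (by simp)
        have hmd : Mono (K.d 0 1) := h0.mono_g hf0
        exact mono_of_mono_fac (HomologicalComplex.toCycles_i K 0 1)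
      have : IsIso (K.toCycles 0 1) := isIso_of_mono_of_epi _
      -- nontriviality for `K.X 0`
      have hnt : Nontrivial (Ext T (K.X 0) (q - 1)) := by
        rw [hK 0 (by omega)]
        refine nontrivial_ext_biproduct_stmt1 _ _ ⟨0, hm 0 (by omega)⟩ ?_
        rw [hO]
        right
        refine ⟨rfl, by push_cast; omega⟩
      exact nontrivial_ext_retract_stmt1 (K.toCycles 0 1) (inv (K.toCycles 0 1))
        (IsIso.hom_inv_id _) _ hnt
    | succ i hi ih =>
      intro hle
      have hie : i ≤ e := by omega
      have hnt := ih (by omega)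
      obtain ⟨x₁, hx₁⟩ := @exists_ne _ hnt (0 : Ext T (K.cycles i) (q - i))
      have hx0 : x₁.comp (Ext.mk₀ (ShortComplex.mk (K.iCycles i) (K.toCycles i (i + 1)) (hw i)).f)
          (add_zero _) = 0 := by
        haveI := hvX i hi hie
        exact Subsingleton.elim _ _
      obtain ⟨x₃, hx₃⟩ := Ext.covariant_sequence_exact₁ T (hses i) x₁ hx0
        (show (q - (i + 1)) + 1 = q - i by omega)
      refine ⟨x₃, 0, fun hc => hx₁ ?_⟩
      rw [← hx₃, hc, Ext.zero_comp]
  -- conclude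
  have hfin := main (e + 1) (by omega) (le_refl _)
  have hd0 : K.d (e + 1) (e + 2) = 0 := (hK0 (e + 2) (by omega)).eq_of_tgt _ _
  have : IsIso (K.iCycles (e + 1)) := K.isIso_iCycles (e + 1) (e + 2) (by simp) hd0
  have := nontrivial_ext_retract_stmt1 (K.iCycles (e + 1)) (inv (K.iCycles (e + 1)))
    (IsIso.hom_inv_id _) (q - (e + 1)) hfin
  exact (not_subsingleton_iff_nontrivial.mpr this) hvTop
end

section
/- Let V be a finite-dimensional vector space over a field and let 0 ≠ ω ∈ V. Then the complex 0 → Λ^0 V → Λ^1 V → ⋯ → Λ^{dim V} V → 0, whose differentials are given by wedging with ω, is exact in every degree. -/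
/-!
STATEMENT 4 (exactness of the Koszul complex of a nonzero vector).

Let `V` be a finite-dimensional vector space over a field `K` and `0 ≠ ω ∈ V`.
The complex `0 → Λ^0 V → Λ^1 V → ⋯ → Λ^{dim V} V → 0`, with differentials
`α ↦ ω ∧ α`, is exact in every degree.

Here `⋀[K]^k V` is the `k`-th exterior power, realized in Mathlib as a submodule
of the exterior algebra, and wedging with `ω` is left multiplication by
`ExteriorAlgebra.ι K ω`.  Exactness in every degree is expressed as:
* (degree `0`) the first map is injective: if `x ∈ Λ^0 V` and `ω ∧ x = 0` then `x = 0`;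
* (degree `i+1`, for every `i`, including the top degree `dim V`, where the
  outgoing wedge map is automatically zero) every `x ∈ Λ^{i+1} V` killed by `ω ∧ -`
  is of the form `ω ∧ y` with `y ∈ Λ^i V`.
The fact that this is a complex (`ω ∧ ω ∧ α = 0`) is recorded as well.
-/

/-- Contraction lowers degree: if `x ∈ ⋀^{i+1} V` then `f ⌋ x ∈ ⋀^i V`. -/
lemma contract_mem_exteriorPower {K : Type*} [Field K] {V : Type*} [AddCommGroup V]
    [Module K V] (f : Module.Dual K V) :
    ∀ i : ℕ, ∀ x ∈ ⋀[K]^(i+1) V,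
      CliffordAlgebra.contractLeft (Q := (0 : QuadraticForm K V)) f x ∈ ⋀[K]^i V := by
  intro i
  induction i with
  | zero =>
    intro x hx
    replace hx : x ∈ (LinearMap.range (ExteriorAlgebra.ι K : V →ₗ[K] _)) ^ 1 := hx
    rw [pow_one] at hx
    obtain ⟨v, rfl⟩ := hx
    rw [show ExteriorAlgebra.ι K v = CliffordAlgebra.ι (0 : QuadraticForm K V) v from rfl,
      CliffordAlgebra.contractLeft_ι]
    exact Submodule.algebraMap_mem _
  | succ i ih =>
    intro x hx
    replace hx : x ∈ (LinearMap.range (ExteriorAlgebra.ι K : V →ₗ[K] _)) ^ (i+1+1) := hx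
    rw [pow_succ'] at hx
    refine Submodule.mul_induction_on hx ?_ ?_
    · rintro m ⟨v, rfl⟩ n hn
      rw [show ExteriorAlgebra.ι K v = CliffordAlgebra.ι (0 : QuadraticForm K V) v from rfl,
        CliffordAlgebra.contractLeft_ι_mul]
      refine Submodule.sub_mem _ (Submodule.smul_mem _ _ hn) ?_
      have : CliffordAlgebra.ι (0 : QuadraticForm K V) v *
          CliffordAlgebra.contractLeft (Q := (0 : QuadraticForm K V)) f n ∈
          (LinearMap.range (ExteriorAlgebra.ι K : V →ₗ[K] _)) ^ (i+1) := by
        rw [pow_succ']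
        exact Submodule.mul_mem_mul ⟨v, rfl⟩ (ih _ hn)
      exact this
    · intro a b ha hb
      rw [map_add]
      exact Submodule.add_mem _ ha hb

theorem stmt4 {K : Type*} [Field K] {V : Type*} [AddCommGroup V] [Module K V]
    [FiniteDimensional K V] (ω : V) (hω : ω ≠ 0) :
    (∀ x : ExteriorAlgebra K V,
        ExteriorAlgebra.ι K ω * (ExteriorAlgebra.ι K ω * x) = 0) ∧
    (∀ x ∈ ⋀[K]^0 V, ExteriorAlgebra.ι K ω * x = 0 → x = 0) ∧
    (∀ i : ℕ, ∀ x ∈ ⋀[K]^(i+1) V, ExteriorAlgebra.ι K ω * x = 0 →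
        ∃ y ∈ ⋀[K]^i V, x = ExteriorAlgebra.ι K ω * y) := by
  -- pick a dual vector with `f ω = 1`
  obtain ⟨g, hg⟩ : ∃ g : Module.Dual K V, g ω ≠ 0 := by
    by_contra h
    push_neg at h
    exact hω ((Module.forall_dual_apply_eq_zero_iff K ω).mp h)
  set f : Module.Dual K V := (g ω)⁻¹ • g with hf
  have hfω : f ω = 1 := by simp [hf, inv_mul_cancel₀ hg]
  refine ⟨?_, ?_, ?_⟩
  · intro x
    rw [← mul_assoc, ExteriorAlgebra.ι_sq_zero, zero_mul]
  · intro x hx h0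
    replace hx : x ∈ (LinearMap.range (ExteriorAlgebra.ι K : V →ₗ[K] _)) ^ 0 := hx
    rw [pow_zero] at hx
    obtain ⟨c, rfl⟩ := Submodule.mem_one.mp hx
    rw [← Algebra.commutes, ← Algebra.smul_def] at h0
    rcases smul_eq_zero.mp h0 with hc | hc
    · rw [hc, map_zero]
    · exact absurd hc ((ExteriorAlgebra.ι_eq_zero_iff (R := K) ω).not.mpr hω).elim
  · intro i x hx h0
    refine ⟨CliffordAlgebra.contractLeft (Q := (0 : QuadraticForm K V)) f x,
      contract_mem_exteriorPower f i x hx, ?_⟩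
    have key := CliffordAlgebra.contractLeft_ι_mul (Q := (0 : QuadraticForm K V)) (d := f) ω x
    rw [show CliffordAlgebra.ι (0 : QuadraticForm K V) ω = ExteriorAlgebra.ι K ω from rfl,
      h0, map_zero, hfω, one_smul] at key
    exact sub_eq_zero.mp key.symm
end

section
/- Let q ≥ 3 and h be integers, and consider the formal power series δ(t) = (1 − t)^{−h} (1 − 2t)^{q} (1 − 3t)^{−1} ∈ Z[[t]]. If the coefficients of t and of t^2 in δ(t) are both nonnegative, then 2h ≥ 4q − 7 + √(8q − 23); in particular h ≥ 2q − 3. -/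
/-!
Each factor `(1 - a t)^n`, for any integer `n`, is the rescaled binomial series
`∑ₖ (n choose k) (-a)ᵏ tᵏ`, so the coefficients of `t` and `t²` of `δ` are explicit:
`h - 2q + 3` and `((2h - 4q + 7)² - (8q - 23)) / 8`. Nonnegativity of the first gives
`2h - 4q + 7 ≥ 1 > 0`, and then nonnegativity of the second is exactly
`√(8q - 23) ≤ 2h - 4q + 7`.
-/

open PowerSeries

theorem Ring.two_mul_choose_two {R : Type*} [CommRing R] [BinomialRing R] (r : R) :
    2 * Ring.choose r 2 = r * (r - 1) := by
  have := Ring.descPochhammer_eq_factorial_smul_choose r 2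
  simp only [descPochhammer_succ_right, descPochhammer_zero, CharP.cast_eq_zero, sub_zero, one_mul,
    Nat.cast_one, Polynomial.smeval_mul, Polynomial.smeval_X, pow_one, Polynomial.smeval_sub,
    Polynomial.smeval_one, pow_zero, one_smul, Nat.factorial_two, nsmul_eq_mul,
    Nat.cast_ofNat] at this
  exact this.symm

theorem four_mul_sub_seven_add_sqrt_le {q h : ℝ} (hlin : 2 * q - 3 ≤ h)
    (hsq : 8 * q - 23 ≤ (2 * h - 4 * q + 7) ^ 2) : 4 * q - 7 + √(8 * q - 23) ≤ 2 * h := by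
  have := Real.sqrt_le_iff.mpr ⟨by linarith, hsq⟩
  linarith

namespace PowerSeries

section Semiring

variable {R : Type*} [Semiring R] {f g : R⟦X⟧}

theorem coeff_one_mul_of_constantCoeff_eq_one (hf : constantCoeff f = 1)
    (hg : constantCoeff g = 1) : coeff 1 (f * g) = coeff 1 f + coeff 1 g := by
  simp [coeff_mul, Finset.Nat.antidiagonal_succ, hf, hg, add_comm]

theorem coeff_two_mul_of_constantCoeff_eq_one (hf : constantCoeff f = 1)
    (hg : constantCoeff g = 1) :
    coeff 2 (f * g) = coeff 2 f + coeff 1 f * coeff 1 g + coeff 2 g := by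
  simp [coeff_mul, Finset.Nat.antidiagonal_succ, hf, hg, add_comm]

end Semiring

section OneSubCX

variable {A : Type*} [CommRing A]

theorem val_zpow_eq_rescale_binomialSeries (u : A⟦X⟧ˣ) (a : A)
    (hu : (u : A⟦X⟧) = 1 - C a * X) (n : ℤ) :
    ((u ^ n : A⟦X⟧ˣ) : A⟦X⟧) = rescale (-a) (binomialSeries A n) := by
  have hnat (m : ℕ) : ((u ^ m : A⟦X⟧ˣ) : A⟦X⟧) = rescale (-a) (binomialSeries A (m : ℤ)) := by
    rw [Units.val_pow_eq_pow_val, hu, binomialSeries_nat, map_pow, map_add, map_one, rescale_X,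
      map_neg, neg_mul, sub_eq_add_neg]
  obtain ⟨m, rfl | rfl⟩ := Int.eq_nat_or_neg n
  · rw [zpow_natCast, hnat]
  · rw [zpow_neg, zpow_natCast]
    apply Units.inv_eq_of_mul_eq_one_right
    rw [hnat, ← map_mul, ← binomialSeries_add, add_neg_cancel, binomialSeries_zero, map_one]

variable {u : A⟦X⟧ˣ} {a : A} (hu : (u : A⟦X⟧) = 1 - C a * X) (n : ℤ)
include hu

theorem constantCoeff_val_zpow : constantCoeff ((u ^ n : A⟦X⟧ˣ) : A⟦X⟧) = 1 := by
  rw [val_zpow_eq_rescale_binomialSeries u a hu, ← coeff_zero_eq_constantCoeff_apply,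
    coeff_rescale]
  simp

theorem coeff_one_val_zpow : coeff 1 ((u ^ n : A⟦X⟧ˣ) : A⟦X⟧) = -(n * a) := by
  rw [val_zpow_eq_rescale_binomialSeries u a hu, coeff_rescale]
  simp [mul_comm]

theorem two_mul_coeff_two_val_zpow :
    2 * coeff 2 ((u ^ n : A⟦X⟧ˣ) : A⟦X⟧) = n * (n - 1) * a ^ 2 := by
  rw [val_zpow_eq_rescale_binomialSeries u a hu, coeff_rescale, binomialSeries_coeff,
    zsmul_one, mul_left_comm, ← Int.cast_two (R := A), ← Int.cast_mul, Ring.two_mul_choose_two]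
  push_cast
  ring

end OneSubCX

end PowerSeries

theorem stmt11_general (q h : ℤ)
    (u1 u2 u3 : (PowerSeries ℤ)ˣ)
    (hu1 : (u1 : PowerSeries ℤ) = 1 - PowerSeries.X)
    (hu2 : (u2 : PowerSeries ℤ) = 1 - 2 * PowerSeries.X)
    (hu3 : (u3 : PowerSeries ℤ) = 1 - 3 * PowerSeries.X)
    (δ : PowerSeries ℤ)
    (hδ : δ = ((u1 ^ (-h) * u2 ^ q * u3 ^ (-1 : ℤ) : (PowerSeries ℤ)ˣ) : PowerSeries ℤ))
    (h1 : 0 ≤ PowerSeries.coeff 1 δ)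
    (h2 : 0 ≤ PowerSeries.coeff 2 δ) :
    (4 * (q : ℝ) - 7 + Real.sqrt (8 * (q : ℝ) - 23) ≤ 2 * (h : ℝ)) ∧
      2 * q - 3 ≤ h := by
  have hv1 : (u1 : ℤ⟦X⟧) = 1 - C 1 * X := by rw [hu1, map_one, one_mul]
  have hv2 : (u2 : ℤ⟦X⟧) = 1 - C 2 * X := by rw [hu2, map_ofNat]
  have hv3 : (u3 : ℤ⟦X⟧) = 1 - C 3 * X := by rw [hu3, map_ofNat]
  have hδ' : δ = ((u1 ^ (-h) : ℤ⟦X⟧ˣ) : ℤ⟦X⟧) * ((u2 ^ q : ℤ⟦X⟧ˣ) : ℤ⟦X⟧) *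
      ((u3 ^ (-1 : ℤ) : ℤ⟦X⟧ˣ) : ℤ⟦X⟧) := by
    rw [hδ, Units.val_mul, Units.val_mul]
  have hF := constantCoeff_val_zpow hv1 (-h)
  have hG := constantCoeff_val_zpow hv2 q
  have hH := constantCoeff_val_zpow hv3 (-1)
  have hFG : constantCoeff (((u1 ^ (-h) : ℤ⟦X⟧ˣ) : ℤ⟦X⟧) * ((u2 ^ q : ℤ⟦X⟧ˣ) : ℤ⟦X⟧)) = 1 := by
    rw [map_mul, hF, hG, one_mul]
  have hcoeff1 : coeff 1 δ = h - 2 * q + 3 := by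
    rw [hδ', coeff_one_mul_of_constantCoeff_eq_one hFG hH,
      coeff_one_mul_of_constantCoeff_eq_one hF hG,
      coeff_one_val_zpow hv1, coeff_one_val_zpow hv2, coeff_one_val_zpow hv3]
    push_cast
    ring
  have hcoeff2 : 8 * coeff 2 δ = (2 * h - 4 * q + 7) ^ 2 - (8 * q - 23) := by
    rw [hδ', coeff_two_mul_of_constantCoeff_eq_one hFG hH,
      coeff_two_mul_of_constantCoeff_eq_one hF hG, coeff_one_mul_of_constantCoeff_eq_one hF hG,
      coeff_one_val_zpow hv1, coeff_one_val_zpow hv2, coeff_one_val_zpow hv3]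
    linear_combination (norm := (push_cast; ring)) 4 * two_mul_coeff_two_val_zpow hv1 (-h) +
      4 * two_mul_coeff_two_val_zpow hv2 q + 4 * two_mul_coeff_two_val_zpow hv3 (-1)
  have hlin : 2 * q - 3 ≤ h := by linarith
  refine ⟨four_mul_sub_seven_add_sqrt_le (by exact_mod_cast hlin) ?_, hlin⟩
  exact_mod_cast (by linarith : 8 * q - 23 ≤ (2 * h - 4 * q + 7) ^ 2)

theorem stmt11 (q h : ℤ) (hq : 3 ≤ q)
    (u1 u2 u3 : (PowerSeries ℤ)ˣ)
    (hu1 : (u1 : PowerSeries ℤ) = 1 - PowerSeries.X)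
    (hu2 : (u2 : PowerSeries ℤ) = 1 - 2 * PowerSeries.X)
    (hu3 : (u3 : PowerSeries ℤ) = 1 - 3 * PowerSeries.X)
    (δ : PowerSeries ℤ)
    (hδ : δ = ((u1 ^ (-h) * u2 ^ q * u3 ^ (-1 : ℤ) : (PowerSeries ℤ)ˣ) : PowerSeries ℤ))
    (h1 : 0 ≤ PowerSeries.coeff 1 δ)
    (h2 : 0 ≤ PowerSeries.coeff 2 δ) :
    (4 * (q : ℝ) - 7 + Real.sqrt (8 * (q : ℝ) - 23) ≤ 2 * (h : ℝ)) ∧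
      2 * q - 3 ≤ h :=
  stmt11_general q h u1 u2 u3 hu1 hu2 hu3 δ hδ h1 h2
end

section
/- Let q ≥ 2 and h be integers, and consider the formal power series δ(t) = (1 − t)^{−h} (1 − 2t)^{q} ∈ Z[[t]]. If the coefficients of t and of t^2 in δ(t) are both nonnegative, then 2h ≥ 4q − 1 + √(8q + 1); in particular h ≥ 2q. -/
open PowerSeries

private lemma two_eq_C : (2 : PowerSeries ℤ) = C 2 := (map_ofNat _ 2).symm

private lemma coeff1_mul (f g : PowerSeries ℤ) :
    coeff 1 (f * g) = constantCoeff f * coeff 1 g + coeff 1 f * constantCoeff g := by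
  rw [PowerSeries.coeff_mul, show (Finset.HasAntidiagonal.antidiagonal 1 : Finset (ℕ×ℕ)) = {(0,1),(1,0)} by decide]
  rw [Finset.sum_insert (by decide), Finset.sum_singleton]
  simp

private lemma coeff2_mul (f g : PowerSeries ℤ) :
    coeff 2 (f * g) = constantCoeff f * coeff 2 g + coeff 1 f * coeff 1 g
      + coeff 2 f * constantCoeff g := by
  rw [PowerSeries.coeff_mul, show (Finset.HasAntidiagonal.antidiagonal 2 : Finset (ℕ×ℕ)) = {(0,2),(1,1),(2,0)} by decide]
  rw [Finset.sum_insert (by decide), Finset.sum_insert (by decide), Finset.sum_singleton]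
  simp; ring

/-- Coefficients of integer powers of a unit power series with constant coefficient 1. -/
private lemma zpow_coeffs (u : (PowerSeries ℤ)ˣ) (b c : ℤ)
    (h0 : constantCoeff (u : PowerSeries ℤ) = 1)
    (hb : coeff 1 (u : PowerSeries ℤ) = b)
    (hc : coeff 2 (u : PowerSeries ℤ) = c) (n : ℤ) :
    constantCoeff ((u ^ n : (PowerSeries ℤ)ˣ) : PowerSeries ℤ) = 1 ∧
    coeff 1 ((u ^ n : (PowerSeries ℤ)ˣ) : PowerSeries ℤ) = n * b ∧
    2 * coeff 2 ((u ^ n : (PowerSeries ℤ)ˣ) : PowerSeries ℤ)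
      = 2 * n * c + n * (n - 1) * b ^ 2 := by
  -- coefficients of u⁻¹
  have huv : ((u : PowerSeries ℤ) * ((u⁻¹ : (PowerSeries ℤ)ˣ) : PowerSeries ℤ)) = 1 := by
    rw [← Units.val_mul, mul_inv_cancel, Units.val_one]
  have hv0 : constantCoeff ((u⁻¹ : (PowerSeries ℤ)ˣ) : PowerSeries ℤ) = 1 := by
    have := congrArg (constantCoeff) huv
    rw [map_mul, h0, map_one, one_mul] at this
    exact this
  have hv1 : coeff 1 ((u⁻¹ : (PowerSeries ℤ)ˣ) : PowerSeries ℤ) = -b := by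
    have := congrArg (coeff 1) huv
    rw [coeff1_mul] at this
    simp [h0, hb, hv0] at this
    linarith
  have hv2 : coeff 2 ((u⁻¹ : (PowerSeries ℤ)ˣ) : PowerSeries ℤ) = b ^ 2 - c := by
    have := congrArg (coeff 2) huv
    rw [coeff2_mul] at this
    simp [h0, hb, hc, hv0, hv1] at this
    nlinarith [this]
  induction n using Int.induction_on with
  | zero => simp
  | succ k ih =>
    obtain ⟨i0, i1, i2⟩ := ih
    have hstep : ((u ^ ((k : ℤ) + 1) : (PowerSeries ℤ)ˣ) : PowerSeries ℤ)
        = ((u ^ (k : ℤ) : (PowerSeries ℤ)ˣ) : PowerSeries ℤ) * (u : PowerSeries ℤ) := by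
      rw [← Units.val_mul, ← zpow_add_one]
    rw [hstep]
    refine ⟨by rw [map_mul, i0, h0, mul_one], ?_, ?_⟩
    · rw [coeff1_mul, i0, i1, h0, hb]; ring
    · rw [coeff2_mul, i0, i1, h0, hb, hc]
      push_cast
      nlinarith [i2]
  | pred k ih =>
    obtain ⟨i0, i1, i2⟩ := ih
    have hstep : ((u ^ (-(k : ℤ) - 1) : (PowerSeries ℤ)ˣ) : PowerSeries ℤ)
        = ((u ^ (-(k : ℤ)) : (PowerSeries ℤ)ˣ) : PowerSeries ℤ)
          * ((u⁻¹ : (PowerSeries ℤ)ˣ) : PowerSeries ℤ) := by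
      rw [← Units.val_mul, ← zpow_sub_one]
    rw [hstep]
    refine ⟨by rw [map_mul, i0, hv0, mul_one], ?_, ?_⟩
    · rw [coeff1_mul, i0, i1, hv0, hv1]; ring
    · rw [coeff2_mul, i0, i1, hv0, hv1, hv2]
      push_cast
      nlinarith [i2]

theorem stmt12 (q h : ℤ) (hq : 2 ≤ q)
    (u1 u2 : (PowerSeries ℤ)ˣ)
    (hu1 : (u1 : PowerSeries ℤ) = 1 - PowerSeries.X)
    (hu2 : (u2 : PowerSeries ℤ) = 1 - 2 * PowerSeries.X)
    (δ : PowerSeries ℤ)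
    (hδ : δ = ((u1 ^ (-h) * u2 ^ q : (PowerSeries ℤ)ˣ) : PowerSeries ℤ))
    (h1 : 0 ≤ PowerSeries.coeff 1 δ)
    (h2 : 0 ≤ PowerSeries.coeff 2 δ) :
    (4 * (q : ℝ) - 1 + Real.sqrt (8 * (q : ℝ) + 1) ≤ 2 * (h : ℝ)) ∧
      2 * q ≤ h := by
  obtain ⟨a0, a1, a2⟩ := zpow_coeffs u1 (-1) 0 (by simp [hu1]) (by simp [hu1]) (by simp [hu1, coeff_X]) (-h)
  obtain ⟨b0, b1, b2⟩ := zpow_coeffs u2 (-2) 0 (by rw [hu2, two_eq_C, map_sub, map_one, map_mul, constantCoeff_C, constantCoeff_X]; norm_num)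
      (by rw [hu2, two_eq_C, map_sub, coeff_C_mul, coeff_one, coeff_X]; norm_num)
      (by rw [hu2, two_eq_C, map_sub, coeff_C_mul, coeff_one, coeff_X]; norm_num) q
  rw [hδ, Units.val_mul] at h1 h2
  rw [coeff1_mul, a0, a1, b0, b1] at h1
  rw [coeff2_mul, a0, a1, b0, b1] at h2
  -- h1 : 0 ≤ h - 2q  (after simplification), h2 : 2*coeff2 ≥ 0
  have hA : 2 * q ≤ h := by nlinarith [h1]
  have hB : 0 ≤ h ^ 2 + h - 4 * q * h + 4 * q ^ 2 - 4 * q := by nlinarith [h2, a2, b2]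
  refine ⟨?_, hA⟩
  have hAr : 2 * (q : ℝ) ≤ (h : ℝ) := by exact_mod_cast hA
  have hBr : (0 : ℝ) ≤ (h : ℝ) ^ 2 + h - 4 * q * h + 4 * q ^ 2 - 4 * q := by exact_mod_cast hB
  have hs : Real.sqrt (8 * (q : ℝ) + 1) ≤ 2 * (h : ℝ) - 4 * q + 1 := by
    have h1 : (8 * (q : ℝ) + 1) ≤ (2 * (h : ℝ) - 4 * q + 1) ^ 2 := by nlinarith
    calc Real.sqrt (8 * (q : ℝ) + 1) ≤ Real.sqrt ((2 * (h : ℝ) - 4 * q + 1) ^ 2) :=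
          Real.sqrt_le_sqrt h1
      _ = 2 * (h : ℝ) - 4 * q + 1 := Real.sqrt_sq (by linarith)
  linarith
end
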